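/- Let H be a graph and let M be a nonempty module of H such that the edge set of the induced subgraph H[M] equals a matching F_M. Then H has a maximum matching F satisfying both: (1) every vertex matched by F_M is matched by F; and (2) either every vertex of M is matched by F, or no edge of F has both endpoints outside M with at least one endpoint in N_H(M). -/

import Mathlib

/-!
Among the maximum matchings choose one, `F`, matching as many vertices of `M` as possible.
If `a ∈ M` is exposed by `F` and adjacent to an endpoint `b` of an edge `f ∈ F` whose other
endpoint is outside `M`, then trading `f` for `ab` gives a maximum matching that matches
strictly more of `M`; so this never happens. For (1), let `ab ∈ F_M` with `a` exposed: `b` is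
matched (else `F + ab` is larger), and the other endpoint of its edge is not in `M`, since
`F_M` is the whole edge set of `H[M]` and is a matching. For (2), an exposed vertex of `M` is
adjacent to every vertex of `N_H(M)`.
-/

open SimpleGraph

/-- A module of a graph: every vertex outside `M` is adjacent to all of `M` or to none of `M`. -/
def IsModule {V : Type*} (G : SimpleGraph V) (M : Set V) : Prop :=
  ∀ x ∈ M, ∀ y ∈ M, ∀ z, z ∉ M → (G.Adj x z ↔ G.Adj y z)

/-- A matching: a set of edges of `G` with pairwise disjoint endpoints. -/
def IsMatching {V : Type*} (G : SimpleGraph V) (F : Set (Sym2 V)) : Prop :=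
  F ⊆ G.edgeSet ∧ ∀ e ∈ F, ∀ f ∈ F, ∀ v : V, v ∈ e → v ∈ f → e = f

/-- A maximum matching: a matching of maximum cardinality. -/
def IsMaximumMatching {V : Type*} (G : SimpleGraph V) (F : Set (Sym2 V)) : Prop :=
  IsMatching G F ∧ ∀ F' : Set (Sym2 V), IsMatching G F' → F'.ncard ≤ F.ncard

/-- A vertex is matched by `F` if it is an endpoint of an edge of `F`. -/
def Matched {V : Type*} (F : Set (Sym2 V)) (v : V) : Prop := ∃ e ∈ F, v ∈ e

/-- The subgraph of `G` induced by `M`, viewed as a graph on the same vertex set. -/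
def inducedOn {V : Type*} (G : SimpleGraph V) (M : Set V) : SimpleGraph V where
  Adj u v := G.Adj u v ∧ u ∈ M ∧ v ∈ M
  symm := ⟨fun u v ⟨h, hu, hv⟩ => ⟨h.symm, hv, hu⟩⟩
  loopless := ⟨fun v h => G.loopless.irrefl v h.1⟩

/-- `N_G(M)` for a nonempty module `M`: the vertices outside `M` adjacent to all of `M`. -/
def moduleNbhd {V : Type*} (G : SimpleGraph V) (M : Set V) : Set V :=
  {w | w ∉ M ∧ ∀ v ∈ M, G.Adj w v}

section

variable {V : Type*} {G : SimpleGraph V} {F F' : Set (Sym2 V)} {a b v : V}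

lemma Matched.mono (hv : Matched F v) (h : F ⊆ F') : Matched F' v :=
  let ⟨e, he, hve⟩ := hv
  ⟨e, h he, hve⟩

lemma IsMatching.mono (hF : IsMatching G F) (h : F' ⊆ F) : IsMatching G F' :=
  ⟨h.trans hF.1, fun e he f hf => hF.2 e (h he) f (h hf)⟩

lemma IsMatching.insert_edge (hF : IsMatching G F) (hab : G.Adj a b) (ha : ¬Matched F a)
    (hb : ¬Matched F b) : IsMatching G (insert s(a, b) F) := by
  have hdisj : ∀ e ∈ F, ∀ v ∈ s(a, b), v ∉ e := by
    rintro e he v hv hve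
    rcases Sym2.mem_iff.mp hv with rfl | rfl
    exacts [ha ⟨e, he, hve⟩, hb ⟨e, he, hve⟩]
  refine ⟨Set.insert_subset hab hF.1, ?_⟩
  rintro e (rfl | he) f (rfl | hf) v hve hvf
  · rfl
  · exact absurd hvf (hdisj f hf v hve)
  · exact absurd hve (hdisj e he v hvf)
  · exact hF.2 e he f hf v hve hvf

lemma IsMatching.not_matched_sdiff (hF : IsMatching G F) {f : Sym2 V} (hf : f ∈ F)
    (hb : b ∈ f) : ¬Matched (F \ {f}) b :=
  fun ⟨e, he, hbe⟩ => he.2 (hF.2 e he.1 f hf b hbe hb)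

lemma IsMatching.swap (hF : IsMatching G F) {f : Sym2 V} (hf : f ∈ F) (hb : b ∈ f)
    (hab : G.Adj a b) (ha : ¬Matched F a) : IsMatching G (insert s(a, b) (F \ {f})) :=
  (hF.mono Set.sdiff_subset).insert_edge hab (fun h => ha (h.mono Set.sdiff_subset))
    (hF.not_matched_sdiff hf hb)

lemma matched_swap {f : Sym2 V} (hv : Matched F v) (hvf : v ∈ f → v = b) :
    Matched (insert s(a, b) (F \ {f})) v := by
  obtain ⟨e, he, hve⟩ := hv
  by_cases hef : e = f
  · subst hef
    rw [hvf hve]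
    exact ⟨_, Set.mem_insert _ _, Sym2.mem_mk_right a b⟩
  · exact ⟨e, Set.mem_insert_of_mem _ ⟨he, hef⟩, hve⟩

def IsMaximumMatchingCoveringMost (G : SimpleGraph V) (M : Set V) (F : Set (Sym2 V)) : Prop :=
  IsMaximumMatching G F ∧ ∀ F', IsMaximumMatching G F' →
    (M ∩ {v | Matched F' v}).ncard ≤ (M ∩ {v | Matched F v}).ncard

section Finite

variable [Finite V]

lemma ncard_insert_of_not_matched (ha : ¬Matched F a) :
    (insert s(a, b) F).ncard = F.ncard + 1 :=
  Set.ncard_insert_of_notMem fun h => ha ⟨_, h, Sym2.mem_mk_left a b⟩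

lemma ncard_swap {f : Sym2 V} (hf : f ∈ F) (ha : ¬Matched F a) :
    (insert s(a, b) (F \ {f})).ncard = F.ncard := by
  rw [ncard_insert_of_not_matched fun h => ha (h.mono Set.sdiff_subset),
    Set.ncard_sdiff_singleton_add_one hf]

lemma IsMaximumMatching.swap (hF : IsMaximumMatching G F) {f : Sym2 V} (hf : f ∈ F)
    (hb : b ∈ f) (hab : G.Adj a b) (ha : ¬Matched F a) :
    IsMaximumMatching G (insert s(a, b) (F \ {f})) :=
  ⟨hF.1.swap hf hb hab ha, fun F' hF' => ncard_swap hf ha ▸ hF.2 F' hF'⟩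

lemma exists_isMaximumMatching (G : SimpleGraph V) : ∃ F, IsMaximumMatching G F := by
  have : Nonempty {F // IsMatching G F} := ⟨⟨∅, by simp [IsMatching]⟩⟩
  obtain ⟨⟨F, hF⟩, hmax⟩ := Finite.exists_max fun F : {F // IsMatching G F} => F.1.ncard
  exact ⟨F, hF, fun F' hF' => hmax ⟨F', hF'⟩⟩

lemma exists_isMaximumMatchingCoveringMost (G : SimpleGraph V) (M : Set V) :
    ∃ F, IsMaximumMatchingCoveringMost G M F := by
  obtain ⟨F₀, hF₀⟩ := exists_isMaximumMatching G
  have : Nonempty {F // IsMaximumMatching G F} := ⟨⟨F₀, hF₀⟩⟩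
  obtain ⟨⟨F, hF⟩, hmax⟩ := Finite.exists_max
    fun F : {F // IsMaximumMatching G F} => (M ∩ {v | Matched F.1 v}).ncard
  exact ⟨F, hF, fun F' hF' => hmax ⟨F', hF'⟩⟩

namespace IsMaximumMatchingCoveringMost

variable {M : Set V}

lemma not_adj_of_not_matched (hF : IsMaximumMatchingCoveringMost G M F) {f : Sym2 V} (hf : f ∈ F)
    (hb : b ∈ f) (hfM : ∀ v ∈ f, v ∈ M → v = b) (haM : a ∈ M) (ha : ¬Matched F a) :
    ¬G.Adj a b := by
  intro hab
  have hsub : M ∩ {v | Matched F v} ⊆ M ∩ {v | Matched (insert s(a, b) (F \ {f})) v} :=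
    fun v hv => ⟨hv.1, matched_swap hv.2 (hfM v · hv.1)⟩
  have hcover := (Set.ssubset_iff_of_subset hsub).mpr
    ⟨a, ⟨haM, s(a, b), Set.mem_insert _ _, Sym2.mem_mk_left a b⟩, fun h => ha h.2⟩
  exact (hF.2 _ (hF.1.swap hf hb hab ha)).not_gt (Set.ncard_lt_ncard hcover)

lemma matched_of_matched_inducedOn (hF : IsMaximumMatchingCoveringMost G M F)
    (hGM : IsMatching (inducedOn G M) (inducedOn G M).edgeSet)
    (ha : Matched (inducedOn G M).edgeSet a) : Matched F a := by
  by_contra haF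
  obtain ⟨e, he, hae⟩ := ha
  obtain ⟨b, rfl⟩ := Sym2.mem_iff_exists.mp hae
  have ⟨hab, haM, hbM⟩ : (inducedOn G M).Adj a b := he
  by_cases hbF : Matched F b
  · obtain ⟨f, hf, hbf⟩ := hbF
    refine hF.not_adj_of_not_matched hf hbf (fun c hcf hcM => ?_) haM haF hab
    by_contra hcb
    -- `f = bc` would be an edge of `G[M]` meeting `ab`, hence equal to it and covering `a`.
    have hfbc : f = s(b, c) := (Sym2.mem_and_mem_iff (Ne.symm hcb)).mp ⟨hbf, hcf⟩
    have hfGM : f ∈ (inducedOn G M).edgeSet := by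
      subst hfbc
      exact ⟨hF.1.1.1 hf, hbM, hcM⟩
    have hfab : s(a, b) = f := hGM.2 _ he f hfGM b (Sym2.mem_mk_right a b) hbf
    exact haF ⟨f, hf, hfab ▸ Sym2.mem_mk_left a b⟩
  · have := hF.1.2 _ (hF.1.1.insert_edge hab haF hbF)
    rw [ncard_insert_of_not_matched haF] at this
    omega

lemma notMem_moduleNbhd (hF : IsMaximumMatchingCoveringMost G M F) {u : V} (huM : u ∈ M)
    (hu : ¬Matched F u) {e : Sym2 V} (he : e ∈ F) (heM : ∀ v ∈ e, v ∉ M) :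
    ∀ v ∈ e, v ∉ moduleNbhd G M :=
  fun _ hv hvN => hF.not_adj_of_not_matched he hv (fun w hw hwM => absurd hwM (heM w hw)) huM hu
    (hvN.2 u huM).symm

end IsMaximumMatchingCoveringMost

end Finite

end

theorem good_maximum_matching_exists_general {V : Type*} [Fintype V]
    (H : SimpleGraph V) (M : Set V)
    (FM : Set (Sym2 V)) (hFM : IsMatching (inducedOn H M) FM)
    (hEM : (inducedOn H M).edgeSet = FM) :
    ∃ F : Set (Sym2 V), IsMaximumMatching H F ∧
      (∀ v : V, Matched FM v → Matched F v) ∧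
      ((∀ v ∈ M, Matched F v) ∨
        ∀ e ∈ F, (∀ v ∈ e, v ∉ M) → ∀ v ∈ e, v ∉ moduleNbhd H M) := by
  subst hEM
  obtain ⟨F, hF⟩ := exists_isMaximumMatchingCoveringMost H M
  refine ⟨F, hF.1, fun v => hF.matched_of_matched_inducedOn hFM, ?_⟩
  by_cases hall : ∀ v ∈ M, Matched F v
  · exact Or.inl hall
  · push Not at hall
    obtain ⟨u, huM, hu⟩ := hall
    exact Or.inr fun e he heM => hF.notMem_moduleNbhd huM hu he heM

/-- If `M` is a nonempty module of `H` whose induced edge set equals a matching `F_M`,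
then `H` has a maximum matching `F` such that (1) every vertex matched by `F_M` is
matched by `F`, and (2) either every vertex of `M` is matched by `F`, or no edge of `F`
has both endpoints outside `M` with at least one endpoint in `N_H(M)`. -/
theorem good_maximum_matching_exists {V : Type*} [Fintype V]
    (H : SimpleGraph V) (M : Set V) (hM : IsModule H M) (hne : M.Nonempty)
    (FM : Set (Sym2 V)) (hFM : IsMatching (inducedOn H M) FM)
    (hEM : (inducedOn H M).edgeSet = FM) :
    ∃ F : Set (Sym2 V), IsMaximumMatching H F ∧
      (∀ v : V, Matched FM v → Matched F v) ∧
      ((∀ v ∈ M, Matched F v) ∨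
        ∀ e ∈ F, (∀ v ∈ e, v ∉ M) → ∀ v ∈ e, v ∉ moduleNbhd H M) :=
  good_maximum_matching_exists_general H M FM hFM hEM
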